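/- arXiv:math/9905164 — 3 statements merged into one kernel-verified Lean document; each statement's English description precedes it below -/
import Mathlib

section
/- The operators satisfy the commutation relation E₊ ∘ E₋ − E₋ ∘ E₊ = (q − q^{−1})^{−1} · (K² − K^{−2}) as linear operators on V, where (K^{±2}F)(x)(n) = q^{±2n}F(x)(n). -/
open MeasureTheory

/-- The symmetric `q`-integer `[m] = (q^m - q^{-m})/(q - q⁻¹)`. -/
noncomputable def qint (q : ℂ) (m : ℤ) : ℂ := (q ^ m - q ^ (-m)) / (q - q⁻¹)

/-- `M_n = λ₊^{-1/p} (λ₊ - [n][n-1])`, where `c = λ₊^{1/p}` is the real `p`-th root. -/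
noncomputable def Mcoef (p : ℕ) (q : ℂ) (lam c : ℝ) (n : ZMod p) : ℂ :=
  ((lam : ℂ) - qint q (n.val : ℤ) * qint q (((n - 1 : ZMod p).val : ℤ))) / (c : ℂ)

/-- `(E₊F)(x)(n) = λ₊^{1/p} e^{x/p} F(x)(n-1)`. -/
noncomputable def Eplus (p : ℕ) (c : ℝ) (F : ℝ → ZMod p → ℂ) : ℝ → ZMod p → ℂ :=
  fun x n => (c : ℂ) * Real.exp (x / p) * F x (n - 1)

/-- `(E₋F)(x)(n) = e^{-x/p} M_{n+1} F(x)(n+1)`. -/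
noncomputable def Eminus (p : ℕ) (q : ℂ) (lam c : ℝ) (F : ℝ → ZMod p → ℂ) :
    ℝ → ZMod p → ℂ :=
  fun x n => (Real.exp (-x / p) : ℂ) * Mcoef p q lam c (n + 1) * F x (n + 1)

/-- `(KF)(x)(n) = q^n F(x)(n)`. -/
noncomputable def Kop (p : ℕ) (q : ℂ) (F : ℝ → ZMod p → ℂ) : ℝ → ZMod p → ℂ :=
  fun x n => q ^ (n.val : ℤ) * F x n

/-- `(K⁻¹F)(x)(n) = q^{-n} F(x)(n)`. -/
noncomputable def Kinv (p : ℕ) (q : ℂ) (F : ℝ → ZMod p → ℂ) : ℝ → ZMod p → ℂ :=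
  fun x n => q ^ (-(n.val : ℤ)) * F x n

/-- `(HF)(x)(n) = -i (dF/dx)(x)(n)`. -/
noncomputable def Hop (p : ℕ) (F : ℝ → ZMod p → ℂ) : ℝ → ZMod p → ℂ :=
  fun x n => -Complex.I * deriv (fun y => F y n) x

/-- `(P₊F)(x)(n) = λ₊ e^x F(x)(n)`. -/
noncomputable def Pplus (p : ℕ) (lam : ℝ) (F : ℝ → ZMod p → ℂ) : ℝ → ZMod p → ℂ :=
  fun x n => (lam : ℂ) * Real.exp x * F x n

/-- `(P₋F)(x)(n) = λ₋ e^{-x} F(x)(n)`. -/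
noncomputable def Pminus (p : ℕ) (lamMinus : ℂ) (F : ℝ → ZMod p → ℂ) : ℝ → ZMod p → ℂ :=
  fun x n => lamMinus * Real.exp (-x) * F x n

/-- Membership in the representation space `V` of smooth compactly supported
functions `ℝ → (ℤ/pℤ → ℂ)`. -/
def InV (p : ℕ) (F : ℝ → ZMod p → ℂ) : Prop :=
  (∀ n : ZMod p, ContDiff ℝ (⊤ : ℕ∞) fun x => F x n) ∧
  (∀ n : ZMod p, HasCompactSupport fun x => F x n)


private lemma qpow_congr {p : ℕ} {q : ℂ} (hq0 : q ≠ 0) (hqp : q ^ (p : ℤ) = 1)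
    {a b : ℤ} (h : (a : ZMod p) = (b : ZMod p)) : q ^ a = q ^ b := by
  have hdvd : (p : ℤ) ∣ b - a := (ZMod.intCast_eq_intCast_iff a b p).mp h |>.dvd
  obtain ⟨k, hk⟩ := hdvd
  have hb : b = a + p * k := by linarith
  rw [hb, zpow_add₀ hq0, zpow_mul, hqp, one_zpow, mul_one]

private lemma qint_congr {p : ℕ} {q : ℂ} (hq0 : q ≠ 0) (hqp : q ^ (p : ℤ) = 1)
    {a b : ℤ} (h : (a : ZMod p) = (b : ZMod p)) : qint q a = qint q b := by
  have h2 : ((-a : ℤ) : ZMod p) = ((-b : ℤ) : ZMod p) := by push_cast at h ⊢; rw [h]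
  unfold qint
  rw [qpow_congr hq0 hqp h, qpow_congr hq0 hqp h2]

theorem stmt_3 (p : ℕ) (hp3 : 3 ≤ p) (hpodd : Odd p)
    (q : ℂ) (hq : q = Complex.exp (2 * Real.pi * Complex.I / p))
    (lam : ℝ) (hlam : lam ≠ 0) (c : ℝ) (hc : c ^ p = lam)
    (F : ℝ → ZMod p → ℂ) (hF : InV p F) :
    ∀ (x : ℝ) (n : ZMod p),
      Eplus p c (Eminus p q lam c F) x n - Eminus p q lam c (Eplus p c F) x n =
        (q - q⁻¹)⁻¹ * (q ^ (2 * (n.val : ℤ)) - q ^ (-(2 * (n.val : ℤ)))) * F x n := by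
  intro x n
  haveI : NeZero p := ⟨by omega⟩
  have hp0 : (p : ℂ) ≠ 0 := by exact_mod_cast (by omega : p ≠ 0)
  have hq0 : q ≠ 0 := by rw [hq]; exact Complex.exp_ne_zero _
  have hpiI : (2 * (Real.pi : ℂ) * Complex.I) ≠ 0 :=
    mul_ne_zero (mul_ne_zero two_ne_zero (Complex.ofReal_ne_zero.mpr Real.pi_ne_zero))
      Complex.I_ne_zero
  have hqp : q ^ (p : ℤ) = 1 := by
    rw [hq, ← Complex.exp_int_mul]
    have h1 : ((p : ℤ) : ℂ) * (2 * Real.pi * Complex.I / p) = 2 * Real.pi * Complex.I := by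
      rw [Int.cast_natCast]
      field_simp
    rw [h1]
    exact Complex.exp_two_pi_mul_I
  have hq2 : q ^ (2 : ℕ) ≠ 1 := by
    intro h2
    rw [hq, ← Complex.exp_nat_mul] at h2
    obtain ⟨k, hk⟩ := Complex.exp_eq_one_iff.mp h2
    have hkey : ((k * p : ℤ) : ℂ) = 2 := by
      apply mul_right_cancel₀ hpiI
      push_cast
      field_simp at hk
      linear_combination (-2 * Real.pi * Complex.I) * hk
    have h2' : (k * p : ℤ) = 2 := by exact_mod_cast hkey
    have hdvd : (p : ℤ) ∣ 2 := ⟨k, by linarith⟩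
    have := Int.le_of_dvd (by norm_num) hdvd
    omega
  have hd : q - q⁻¹ ≠ 0 := by
    intro h
    apply hq2
    have h1 : q * (q - q⁻¹) = q ^ 2 - 1 := by field_simp
    rw [h, mul_zero] at h1
    exact (sub_eq_zero.mp h1.symm)
  have hc0 : (c : ℂ) ≠ 0 := by
    intro h
    apply hlam
    have : c = 0 := by exact_mod_cast h
    rw [← hc, this, zero_pow (by omega : p ≠ 0)]
  -- exponentials cancel
  have hE : (Real.exp (x / p) : ℂ) * (Real.exp (-x / p) : ℂ) = 1 := by
    have h0 : x / p + -x / p = 0 := by ring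
    rw [← Complex.ofReal_mul, ← Real.exp_add, h0, Real.exp_zero, Complex.ofReal_one]
  -- identify the qint arguments
  set m : ℤ := (n.val : ℤ) with hm
  have hmn : ((m : ℤ) : ZMod p) = n := by
    rw [hm]; push_cast; simp [ZMod.natCast_val, ZMod.cast_id]
  have hv1 : qint q (((n + 1 : ZMod p)).val : ℤ) = qint q (m + 1) := by
    apply qint_congr hq0 hqp
    push_cast [ZMod.natCast_val, ZMod.cast_id, hmn]
    rfl
  have hv2 : qint q (((n - 1 : ZMod p)).val : ℤ) = qint q (m - 1) := by
    apply qint_congr hq0 hqp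
    push_cast [ZMod.natCast_val, ZMod.cast_id, hmn]
    rfl
  have hv0 : qint q ((n.val : ℤ)) = qint q m := rfl
  -- unfold the operators
  simp only [Eplus, Eminus, Mcoef, sub_add_cancel, add_sub_cancel_right, hv0, hv1, hv2]
  set a : ℂ := q ^ m with ha
  have ha0 : a ≠ 0 := zpow_ne_zero _ hq0
  have e1 : q ^ (m + 1) = a * q := by rw [zpow_add₀ hq0, zpow_one]
  have e2 : q ^ (-(m + 1)) = a⁻¹ * q⁻¹ := by
    rw [neg_add, zpow_add₀ hq0, zpow_neg, zpow_neg, zpow_one, ha]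
  have e3 : q ^ (m - 1) = a * q⁻¹ := by
    rw [sub_eq_add_neg, zpow_add₀ hq0, zpow_neg, zpow_one, ha]
  have e4 : q ^ (-(m - 1)) = a⁻¹ * q := by
    rw [neg_sub, sub_eq_add_neg, zpow_add₀ hq0, zpow_one, zpow_neg, ha, mul_comm]
  have e5 : q ^ (2 * m) = a * a := by rw [two_mul, zpow_add₀ hq0, ha]
  have e6 : q ^ (-(2 * m)) = a⁻¹ * a⁻¹ := by rw [zpow_neg, e5, mul_inv]
  have e7 : q ^ (-m) = a⁻¹ := by rw [zpow_neg, ha]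
  have hcc : (c : ℂ) * (c : ℂ)⁻¹ = 1 := mul_inv_cancel₀ hc0
  have key : qint q (m + 1) * qint q m - qint q m * qint q (m - 1)
      = (q - q⁻¹)⁻¹ * (a * a - a⁻¹ * a⁻¹) := by
    have hdd : (q - q⁻¹) * (q - q⁻¹)⁻¹ = 1 := mul_inv_cancel₀ hd
    simp only [qint, e1, e2, e3, e4, e7, ha]
    linear_combination (a * a - a⁻¹ * a⁻¹) * (q - q⁻¹)⁻¹ * hdd
  rw [e5, e6]
  linear_combination
    ((qint q (m + 1) * qint q m - qint q m * qint q (m - 1)) * F x n * ((c : ℂ) * (c : ℂ)⁻¹)) * hE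
      + ((qint q (m + 1) * qint q m - qint q m * qint q (m - 1)) * F x n) * hcc
      + F x n * key
end

section
/- The p-th power of the operator E₋ equals the operator P₋, i.e., E₋^p = P₋ as linear operators on V, where λ₋ = ∏_{n=0}^{p−1} M_n; in other words the fractional supersymmetry generator E₋ is a p-th root of the translation generator P₋ in this representation. -/
open MeasureTheory

lemma prod_range_zmod (p : ℕ) [NeZero p] (f : ZMod p → ℂ) :
    ∏ j ∈ Finset.range p, f (j : ℕ) = ∏ m : ZMod p, f m := by
  symm
  apply Finset.prod_nbij' (fun m : ZMod p => m.val) (fun j : ℕ => (j : ZMod p))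
  · intro a _; exact Finset.mem_range.mpr a.val_lt
  · intro a _; exact Finset.mem_univ _
  · intro a _; exact ZMod.natCast_rightInverse a
  · intro a ha; exact ZMod.val_cast_of_lt (Finset.mem_range.mp ha)
  · intro a _; rw [ZMod.natCast_rightInverse a]

lemma eminus_iter (p : ℕ) (q : ℂ) (lam c : ℝ) (F : ℝ → ZMod p → ℂ) (k : ℕ) :
    (Eminus p q lam c)^[k] F = fun x n =>
      (Real.exp (-(k * x) / p) : ℂ) *
        (∏ j ∈ Finset.range k, Mcoef p q lam c (n + 1 + (j : ℕ))) * F x (n + (k : ℕ)) := by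
  induction k with
  | zero => funext x n; simp
  | succ k ih =>
    rw [Function.iterate_succ_apply', ih]
    funext x n
    simp only [Eminus, Finset.prod_range_succ']
    have hexp : (Real.exp (-x / p) : ℂ) * (Real.exp (-(k * x) / p) : ℂ)
        = (Real.exp (-((k + 1 : ℕ) * x) / p) : ℂ) := by
      norm_cast
      rw [← Real.exp_add]
      congr 1
      push_cast
      ring
    have hc1 : ∀ j : ℕ, n + 1 + ((j : ℕ) + 1 : ℕ) = n + 1 + 1 + (j : ℕ) := by
      intro j; push_cast; ring
    have hc2 : n + 1 + ((k : ℕ) : ZMod p) = n + ((k + 1 : ℕ) : ZMod p) := by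
      push_cast; ring
    simp only [hc1]
    rw [← hc2, ← hexp]
    simp only [Nat.cast_zero, add_zero]
    ring

theorem stmt_6 (p : ℕ) [NeZero p] (hp3 : 3 ≤ p) (hpodd : Odd p)
    (q : ℂ) (hq : q = Complex.exp (2 * Real.pi * Complex.I / p))
    (lam : ℝ) (hlam : lam ≠ 0) (c : ℝ) (hc : c ^ p = lam)
    (F : ℝ → ZMod p → ℂ) (hF : InV p F) :
    (Eminus p q lam c)^[p] F = Pminus p (∏ n : ZMod p, Mcoef p q lam c n) F := by
  rw [eminus_iter]
  funext x n
  have hp0 : (p : ℝ) ≠ 0 := Nat.cast_ne_zero.mpr (NeZero.ne p)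
  have h1 : -((p : ℝ) * x) / p = -x := by field_simp
  have h2 : ((p : ℕ) : ZMod p) = 0 := ZMod.natCast_self p
  have h3 : ∏ j ∈ Finset.range p, Mcoef p q lam c (n + 1 + (j : ℕ)) =
      ∏ m : ZMod p, Mcoef p q lam c m := by
    rw [prod_range_zmod p (fun m => Mcoef p q lam c (n + 1 + m))]
    exact Fintype.prod_equiv (Equiv.addLeft (n + 1)) _ _ (fun m => rfl)
  rw [h1, h2, h3, add_zero]
  simp only [Pminus]
  ring
end

section
/- The operator E₋ is symmetric with respect to the indefinite Hermitian form: for all F, G ∈ V one has ⟨E₋F, G⟩ = ⟨F, E₋G⟩. (This uses that the coefficients M_n are real for real λ₊ and satisfy M_n = M_{1−n} for all n ∈ ℤ/pℤ; it is part of the statement that π_{λ±} is a *-representation of U_FS, where E₋* = E₋.) -/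
open MeasureTheory

/-- The indefinite Hermitian form `⟨F,G⟩ = ∫_ℝ ∑ₙ F(x)(n) conj(G(x)(-n)) dx`. -/
noncomputable def herm (p : ℕ) [NeZero p] (F G : ℝ → ZMod p → ℂ) : ℂ :=
  ∫ x : ℝ, ∑ n : ZMod p, F x n * (starRingEnd ℂ) (G x (-n))


lemma zpow_eq_of_zmod_eq (p : ℕ) [NeZero p] (q : ℂ) (hq1 : q ^ (p : ℤ) = 1)
    {a b : ℤ} (h : (a : ZMod p) = (b : ZMod p)) : q ^ a = q ^ b := by
  have hq0 : q ≠ 0 := by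
    intro h0
    rw [h0] at hq1
    simp [zero_zpow, (Nat.pos_of_ne_zero (NeZero.ne p)).ne'] at hq1
  have hdvd : (p : ℤ) ∣ b - a := by
    have : ((b - a : ℤ) : ZMod p) = 0 := by push_cast; rw [h]; ring
    exact (ZMod.intCast_zmod_eq_zero_iff_dvd _ _).mp this
  obtain ⟨k, hk⟩ := hdvd
  have : b = a + (p : ℤ) * k := by linarith
  rw [this, zpow_add₀ hq0, zpow_mul, hq1, one_zpow, mul_one]

lemma qint_neg' (q : ℂ) (m : ℤ) : qint q (-m) = - qint q m := by
  unfold qint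
  rw [neg_neg]
  ring

lemma qint_zmod (p : ℕ) [NeZero p] (q : ℂ) (hq1 : q ^ (p : ℤ) = 1)
    {a b : ℤ} (h : (a : ZMod p) = (b : ZMod p)) : qint q a = qint q b := by
  unfold qint
  rw [zpow_eq_of_zmod_eq p q hq1 h, zpow_eq_of_zmod_eq p q hq1 (by rw [Int.cast_neg, Int.cast_neg, h] : ((-a : ℤ) : ZMod p) = ((-b : ℤ) : ZMod p))]

lemma qint_conj (q : ℂ) (hqc : (starRingEnd ℂ) q = q⁻¹) (m : ℤ) :
    (starRingEnd ℂ) (qint q m) = qint q m := by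
  unfold qint
  rw [map_div₀, map_sub, map_sub, map_zpow₀, map_zpow₀, hqc, map_inv₀, hqc, inv_inv,
    inv_zpow, inv_zpow, ← zpow_neg, ← zpow_neg, neg_neg]
  rw [show q ^ (-m) - q ^ m = -(q ^ m - q ^ (-m)) by ring,
    show q⁻¹ - q = -(q - q⁻¹) by ring, neg_div_neg_eq]

theorem stmt_8 (p : ℕ) [NeZero p] (hp3 : 3 ≤ p) (hpodd : Odd p)
    (q : ℂ) (hq : q = Complex.exp (2 * Real.pi * Complex.I / p))
    (lam : ℝ) (hlam : lam ≠ 0) (c : ℝ) (hc : c ^ p = lam)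
    (F G : ℝ → ZMod p → ℂ) (hF : InV p F) (hG : InV p G) :
    herm p (Eminus p q lam c F) G = herm p F (Eminus p q lam c G) := by
  -- basic facts about q
  have hppos : (0:ℕ) < p := Nat.pos_of_ne_zero (NeZero.ne p)
  have hpC : (p : ℂ) ≠ 0 := Nat.cast_ne_zero.mpr (NeZero.ne p)
  have hq1 : q ^ (p : ℤ) = 1 := by
    rw [hq, zpow_natCast, ← Complex.exp_nat_mul]
    rw [show (p : ℂ) * (2 * Real.pi * Complex.I / p) = 2 * Real.pi * Complex.I by
      field_simp]
    exact Complex.exp_two_pi_mul_I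
  have hqc : (starRingEnd ℂ) q = q⁻¹ := by
    rw [hq, ← Complex.exp_conj, ← Complex.exp_neg]
    congr 1
    simp [map_div₀, Complex.conj_I, map_ofNat, Complex.conj_ofReal]
    ring
  -- M is real
  have hMreal : ∀ m : ZMod p, (starRingEnd ℂ) (Mcoef p q lam c m) = Mcoef p q lam c m := by
    intro m
    unfold Mcoef
    rw [map_div₀, map_sub, map_mul, Complex.conj_ofReal, Complex.conj_ofReal,
      qint_conj q hqc, qint_conj q hqc]
  -- M_{1-m} = M_m
  have hcastval : ∀ m : ZMod p, ((m.val : ℤ) : ZMod p) = m := by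
    intro m
    rw [Int.cast_natCast, ZMod.natCast_val, ZMod.cast_id]
  have hMsym : ∀ m : ZMod p, Mcoef p q lam c (1 - m) = Mcoef p q lam c m := by
    intro m
    unfold Mcoef
    have h1 : qint q (((1 - m : ZMod p).val : ℤ)) = - qint q (((m - 1 : ZMod p).val : ℤ)) := by
      rw [← qint_neg']
      apply qint_zmod p q hq1
      rw [Int.cast_neg, hcastval, hcastval]
      ring
    have h2 : qint q (((1 - m - 1 : ZMod p).val : ℤ)) = - qint q ((m.val : ℤ)) := by
      rw [← qint_neg']
      apply qint_zmod p q hq1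
      rw [Int.cast_neg, hcastval, hcastval]
      ring
    rw [show (1 - m - 1 : ZMod p) = 1 - m - 1 from rfl] at h2
    rw [h1]
    rw [show (1 - m - 1 : ZMod p) = 1 - m - 1 from rfl, h2]
    ring_nf
  -- main computation
  unfold herm Eminus
  congr 1
  funext x
  refine Fintype.sum_equiv (Equiv.addRight (1 : ZMod p)) _ _ ?_
  intro n
  simp only [Equiv.coe_addRight]
  have hMn : Mcoef p q lam c (-(n + 1) + 1) = Mcoef p q lam c (n + 1) := by
    rw [show (-(n + 1) + 1 : ZMod p) = 1 - (n + 1) by ring, hMsym]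
  rw [map_mul, map_mul, Complex.conj_ofReal, hMn, hMreal]
  rw [show (-(n + 1) + 1 : ZMod p) = -n by ring]
  ring
end
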